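/- Let a = (a_1, ..., a_n) ∈ ℝ^n be a unit vector, set a_0 := 0, assume a_i ≠ a_j for every pair of distinct indices i, j ∈ {0, 1, ..., n}, and let f(t) denote the n-dimensional Lebesgue volume of Θ(a,t) := Δ ∩ {x : ⟨a, x⟩ ≤ t}. Then f(t) = 0 for all t ≤ min_{0 ≤ i ≤ n} a_i, f(t) = 1/n! for all t ≥ max_{0 ≤ i ≤ n} a_i, and on each closed interval between two consecutive values among {a_0, a_1, ..., a_n} (ordered increasingly), f coincides with a polynomial function of degree at most n. -/

import Mathlib

/-!
With nodes `A = (0, a₁, …, aₙ)`, the volume is a divided difference of a truncated power: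
`vol Θ(a, t) = [A₀, …, Aₙ] (x ↦ min (x - t) 0 ^ n) / n!`.
This is proved by induction on `n`. Slicing the simplex at `x₁ = σ` leaves the section of the
`(n-1)`-simplex with nodes `(0, a₂, …, aₙ)`, scaled by `1 - σ`; after scaling, the node `x` of
the slice sits at `x + σ (a₁ - x)`. Integrating over `σ ∈ [0, 1]` turns `min (x - t) 0 ^ (n-1)`
into the slope of `min (· - t) 0 ^ n / n` between `x` and `a₁`, and the recurrence
`[a₁, S] g = [S] (slope g a₁)` of divided differences closes the induction.

The three claims are then read off the formula. Below all nodes every term vanishes. Above all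
nodes the truncated power is the polynomial `(x - t) ^ n`, whose divided difference over `n + 1`
nodes is its leading coefficient `1`. Between consecutive nodes each term is either `0` or a
polynomial of degree `n` in `t`.
-/

open MeasureTheory Finset Polynomial

section DivDiff

variable {F : Type*} [Field F] [DecidableEq F]

noncomputable def divDiff (s : Finset F) (g : F → F) : F :=
  ∑ v ∈ s, g v / ∏ w ∈ s.erase v, (v - w)

theorem divDiff_congr {s : Finset F} {g g' : F → F} (h : ∀ x ∈ s, g x = g' x) :
    divDiff s g = divDiff s g' :=
  sum_congr rfl fun v hv => by rw [h v hv]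

theorem mul_divDiff (c : F) (s : Finset F) (g : F → F) :
    c * divDiff s g = divDiff s (fun x => c * g x) := by
  simp only [divDiff, mul_sum, mul_div_assoc]

theorem divDiff_singleton (v : F) (g : F → F) : divDiff {v} g = g v := by
  simp [divDiff]

theorem divDiff_eval {s : Finset F} {P : F[X]} (hP : P.degree < #s) :
    divDiff s P.eval = P.coeff (#s - 1) :=
  (Lagrange.coeff_eq_sum (v := id) (Set.injOn_id _) hP).symm

theorem divDiff_const {s : Finset F} (hs : 2 ≤ #s) (c : F) : divDiff s (fun _ => c) = 0 := by
  have hdeg : (C c).degree < #s :=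
    degree_C_le.trans_lt (by exact_mod_cast (by omega : 0 < #s))
  simpa [coeff_C, show #s - 1 ≠ 0 by omega] using divDiff_eval hdeg

theorem divDiff_insert {s : Finset F} {a : F} (ha : a ∉ s) (hs : s.Nonempty) (g : F → F) :
    divDiff (insert a s) g = divDiff s (slope g a) := by
  have hprod : ∀ v ∈ s,
      ∏ w ∈ (insert a s).erase v, (v - w) = (v - a) * ∏ w ∈ s.erase v, (v - w) := by
    intro v hv
    rw [erase_insert_of_ne (ne_of_mem_of_not_mem hv ha).symm, prod_insert (by simp [ha])]
  have hconst := divDiff_const (s := insert a s)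
    (by rw [card_insert_of_notMem ha]; have := hs.card_pos; omega) (g a)
  simp only [divDiff, sum_insert ha, erase_insert ha] at hconst ⊢
  rw [sum_congr rfl fun v hv => by rw [hprod v hv]] at hconst ⊢
  simp only [slope_def_field, div_div, sub_div, sum_sub_distrib]
  linear_combination hconst

end DivDiff

theorem integral_divDiff {s : Finset ℝ} {H : ℝ → ℝ → ℝ} {a b : ℝ}
    (hH : ∀ x ∈ s, IntervalIntegrable (fun σ => H σ x) volume a b) :
    ∫ σ in a..b, divDiff s (H σ) = divDiff s (fun x => ∫ σ in a..b, H σ x) := by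
  simp only [divDiff]
  rw [intervalIntegral.integral_finsetSum fun v hv => (hH v hv).div_const _]
  simp only [intervalIntegral.integral_div]

section TruncatedPower

variable {s : Finset ℝ} {m : ℕ} {t : ℝ}

theorem divDiff_min_sub_pow_eq_zero (hm : m ≠ 0) (h : ∀ v ∈ s, t ≤ v) :
    divDiff s (fun x => min (x - t) 0 ^ m) = 0 :=
  sum_eq_zero fun v hv => by
    simp only [min_eq_right (sub_nonneg.2 (h v hv)), zero_pow hm, zero_div]

theorem divDiff_min_sub_pow_eq_one (hs : #s = m + 1) (h : ∀ v ∈ s, v ≤ t) :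
    divDiff s (fun x => min (x - t) 0 ^ m) = 1 := by
  have hdeg : ((X - C t : ℝ[X]) ^ m).degree < (#s : WithBot ℕ) := by
    rw [hs, degree_pow, degree_X_sub_C, nsmul_one]
    exact_mod_cast Nat.lt_succ_self m
  rw [divDiff_congr fun v hv => by rw [min_eq_left (sub_nonpos.2 (h v hv))],
    show (fun v => (v - t) ^ m) = ((X - C t) ^ m).eval by ext; simp, divDiff_eval hdeg, hs,
    Nat.add_sub_cancel]
  simpa using ((monic_X_sub_C t).pow m).coeff_natDegree

theorem exists_polynomial_eq_divDiff_min_sub_pow (hm : m ≠ 0) {l r : ℝ}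
    (h : ∀ v ∈ s, v ≤ l ∨ r ≤ v) :
    ∃ p : ℝ[X], p.natDegree ≤ m ∧
      ∀ t ∈ Set.Icc l r, divDiff s (fun x => min (x - t) 0 ^ m) = p.eval t := by
  refine ⟨∑ v ∈ s,
      C (if v ≤ l then (∏ w ∈ s.erase v, (v - w))⁻¹ else 0) * (C v - X) ^ m,
    natDegree_sum_le_of_forall_le _ _ fun v _ => by compute_degree, fun t ht => ?_⟩
  rw [eval_finsetSum]
  refine sum_congr rfl fun v hv => ?_
  simp only [eval_mul, eval_C, eval_pow, eval_sub, eval_X]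
  split_ifs with hvl
  · rw [min_eq_left (by linarith [ht.1]), div_eq_inv_mul]
  · rw [min_eq_right (by linarith [ht.2, (h v hv).resolve_left hvl]), zero_pow hm, zero_div,
      zero_mul]

end TruncatedPower

theorem hasDerivAt_min_zero_pow {m : ℕ} (hm : m ≠ 0) (x : ℝ) :
    HasDerivAt (fun x : ℝ => min x 0 ^ (m + 1)) ((m + 1) * min x 0 ^ m) x := by
  rcases lt_trichotomy x 0 with hx | rfl | hx
  · have h : (fun x : ℝ => min x 0 ^ (m + 1)) =ᶠ[nhds x] fun x => x ^ (m + 1) := by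
      filter_upwards [eventually_lt_nhds hx] with y hy
      rw [min_eq_left hy.le]
    rw [min_eq_left hx.le]
    simpa using (hasDerivAt_pow (m + 1) x).congr_of_eventuallyEq h
  · have hO : (fun x : ℝ => min x 0 ^ (m + 1)) =O[nhds 0] fun x => x ^ (m + 1) :=
      Asymptotics.IsBigO.of_bound 1 (Filter.Eventually.of_forall fun y => by
        simp only [norm_pow, Real.norm_eq_abs, one_mul]
        exact pow_le_pow_left₀ (abs_nonneg _) (by rcases le_total y 0 with h | h <;> simp [h]) _)
    rw [hasDerivAt_iff_isLittleO_nhds_zero]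
    simpa [zero_pow hm] using hO.trans_isLittleO (Asymptotics.isLittleO_pow_id (by omega))
  · have h : (fun x : ℝ => min x 0 ^ (m + 1)) =ᶠ[nhds x] fun _ => 0 := by
      filter_upwards [eventually_gt_nhds hx] with y hy
      rw [min_eq_right hy.le, zero_pow (by omega)]
    rw [min_eq_right hx.le, zero_pow hm, mul_zero]
    exact (hasDerivAt_const x 0).congr_of_eventuallyEq h

theorem integral_comp_segment_eq_slope {F F' : ℝ → ℝ} (hF : ∀ x, HasDerivAt F (F' x) x)
    (hF' : Continuous F') {x y : ℝ} (hxy : x ≠ y) :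
    ∫ σ in (0 : ℝ)..1, F' (x + σ * (y - x)) = slope F x y := by
  have h := intervalIntegral.integral_comp_mul_add F' (sub_ne_zero.2 hxy.symm) x (a := 0) (b := 1)
  simp only [mul_zero, zero_add, mul_one, sub_add_cancel] at h
  rw [show (fun σ => F' (x + σ * (y - x))) = fun σ => F' ((y - x) * σ + x) by ext; ring_nf, h,
    intervalIntegral.integral_eq_sub_of_hasDerivAt (fun z _ => hF z) (hF'.intervalIntegrable _ _),
    slope_def_field, smul_eq_mul, div_eq_inv_mul]

theorem image_univ_fin_succ {α : Type*} [DecidableEq α] {m : ℕ} (a : Fin (m + 1) → α) :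
    univ.image a = insert (a 0) (univ.image (Fin.tail a)) := by
  ext x
  simp [Fin.exists_fin_succ, Fin.tail, eq_comm]

theorem card_insert_zero_image_le {m : ℕ} (a : Fin m → ℝ) :
    #(insert 0 (univ.image a)) ≤ m + 1 :=
  (card_insert_le _ _).trans (by simpa using card_image_le (s := univ) (f := a))

def simplexSection {m : ℕ} (a : Fin m → ℝ) (t : ℝ) : Set (Fin m → ℝ) :=
  {x | ((∀ i, 0 ≤ x i) ∧ ∑ i, x i ≤ 1) ∧ ∑ i, a i * x i ≤ t}

section SimplexSection

open Set Pointwise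

variable {m : ℕ}

theorem measurableSet_simplexSection (a : Fin m → ℝ) (t : ℝ) :
    MeasurableSet (simplexSection a t) := by
  simp only [simplexSection, ofPred_and, ofPred_forall]
  exact ((MeasurableSet.iInter fun i =>
      measurableSet_le measurable_const (measurable_pi_apply i)).inter
    (measurableSet_le (by fun_prop) measurable_const)).inter
    (measurableSet_le (by fun_prop) measurable_const)

theorem simplexSection_subset_Icc (a : Fin m → ℝ) (t : ℝ) : simplexSection a t ⊆ Icc 0 1 :=
  fun _ hx => ⟨hx.1.1, fun i => (single_le_sum (fun j _ => hx.1.1 j) (mem_univ i)).trans hx.1.2⟩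

theorem volume_simplexSection_lt_top (a : Fin m → ℝ) (t : ℝ) :
    volume (simplexSection a t) < ⊤ :=
  (measure_mono (simplexSection_subset_Icc a t)).trans_lt measure_Icc_lt_top

theorem smul_simplexSection (a : Fin m → ℝ) (t : ℝ) {c : ℝ} (hc : 0 < c) :
    c • simplexSection a t =
      {x | ((∀ i, 0 ≤ x i) ∧ ∑ i, x i ≤ c) ∧ ∑ i, a i * x i ≤ c * t} := by
  ext x
  simp [mem_smul_set_iff_inv_smul_mem₀ hc.ne', simplexSection, ← mul_sum,
    mul_left_comm _ c⁻¹, inv_mul_le_iff₀ hc, hc]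

theorem cons_mem_simplexSection (a : Fin (m + 1) → ℝ) (t σ : ℝ) (y : Fin m → ℝ) :
    Fin.cons σ y ∈ simplexSection a t ↔
      ((0 ≤ σ ∧ ∀ i, 0 ≤ y i) ∧ σ + ∑ i, y i ≤ 1) ∧
        a 0 * σ + ∑ i, Fin.tail a i * y i ≤ t := by
  simp [simplexSection, Fin.forall_fin_succ, Fin.sum_univ_succ, Fin.tail]

theorem volume_eq_lintegral_volume_cons {α : Type*} [MeasureSpace α]
    [SigmaFinite (volume : Measure α)] {S : Set (Fin (m + 1) → α)} (hS : MeasurableSet S) :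
    volume S = ∫⁻ σ, volume {y : Fin m → α | Fin.cons σ y ∈ S} := by
  have he := (volume_preserving_piFinSuccAbove (fun _ : Fin (m + 1) => α) 0).symm
  rw [← he.measure_preimage_equiv, Measure.volume_eq_prod,
    Measure.prod_apply (hS.preimage (MeasurableEquiv.measurable _))]
  simp only [Set.preimage, MeasurableEquiv.piFinSuccAbove_symm_apply, Fin.insertNthEquiv_zero]
  rfl

theorem slice_simplexSection_eq_smul (a : Fin (m + 1) → ℝ) (t : ℝ) {σ : ℝ}
    (hσ : σ ∈ Ioo (0 : ℝ) 1) :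
    {y | Fin.cons σ y ∈ simplexSection a t} =
      (1 - σ) • simplexSection (Fin.tail a) ((t - a 0 * σ) / (1 - σ)) := by
  have hc : 0 < 1 - σ := sub_pos.2 hσ.2
  rw [smul_simplexSection _ _ hc, mul_div_cancel₀ _ hc.ne']
  ext y
  simp only [mem_ofPred_eq, cons_mem_simplexSection]
  constructor
  · rintro ⟨⟨⟨-, hy⟩, hsum⟩, hlin⟩
    exact ⟨⟨hy, by linarith⟩, by linarith⟩
  · rintro ⟨⟨hy, hsum⟩, hlin⟩
    exact ⟨⟨⟨hσ.1.le, hy⟩, by linarith⟩, by linarith⟩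

theorem slice_simplexSection_eq_empty (a : Fin (m + 1) → ℝ) (t : ℝ) {σ : ℝ}
    (hσ : σ ∉ Icc (0 : ℝ) 1) :
    {y | Fin.cons σ y ∈ simplexSection a t} = ∅ := by
  refine eq_empty_of_forall_notMem fun y hy => hσ ?_
  obtain ⟨⟨⟨hσ0, hy⟩, hsum⟩, -⟩ := (cons_mem_simplexSection a t σ y).1 hy
  exact ⟨hσ0, by linarith [Fintype.sum_nonneg (f := y) hy]⟩

theorem volume_simplexSection_succ_eq_lintegral (a : Fin (m + 1) → ℝ) (t : ℝ) :
    volume (simplexSection a t) = ∫⁻ σ in Ioo 0 1, ENNReal.ofReal ((1 - σ) ^ m) *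
      volume (simplexSection (Fin.tail a) ((t - a 0 * σ) / (1 - σ))) := by
  rw [volume_eq_lintegral_volume_cons (measurableSet_simplexSection a t),
    ← setLIntegral_eq_of_support_subset (s := Icc 0 1), setLIntegral_congr Ioo_ae_eq_Icc.symm]
  · refine setLIntegral_congr_fun measurableSet_Ioo fun σ hσ => ?_
    rw [slice_simplexSection_eq_smul a t hσ,
      Measure.addHaar_smul_of_nonneg _ (sub_pos.2 hσ.2).le, Module.finrank_fin_fun]
  · exact Function.support_subset_iff'.2 fun σ hσ => by
      simp only [slice_simplexSection_eq_empty a t hσ, measure_empty]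

theorem toReal_volume_simplexSection_succ_eq_integral (a : Fin (m + 1) → ℝ) (t : ℝ)
    {h : ℝ → ℝ} (hint : IntervalIntegrable h volume 0 1)
    (hh : ∀ σ ∈ Ioo (0 : ℝ) 1,
      (1 - σ) ^ m * (volume (simplexSection (Fin.tail a) ((t - a 0 * σ) / (1 - σ)))).toReal =
        h σ) :
    (volume (simplexSection a t)).toReal = ∫ σ in (0 : ℝ)..1, h σ := by
  have hnonneg : ∀ σ ∈ Ioo (0 : ℝ) 1, 0 ≤ h σ := fun σ hσ => by
    rw [← hh σ hσ]
    exact mul_nonneg (pow_nonneg (sub_pos.2 hσ.2).le _) ENNReal.toReal_nonneg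
  have hint' : IntegrableOn h (Ioo 0 1) :=
    ((intervalIntegrable_iff_integrableOn_Ioc_of_le zero_le_one).1 hint).mono_set
      Ioo_subset_Ioc_self
  rw [volume_simplexSection_succ_eq_lintegral,
    setLIntegral_congr_fun measurableSet_Ioo fun σ hσ => by
      rw [← ENNReal.ofReal_toReal (volume_simplexSection_lt_top _ _).ne,
        ← ENNReal.ofReal_mul (pow_nonneg (sub_pos.2 hσ.2).le _), hh σ hσ],
    ← ofReal_integral_eq_lintegral_ofReal hint'
      ((ae_restrict_iff' measurableSet_Ioo).2 (Filter.Eventually.of_forall hnonneg)),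
    ENNReal.toReal_ofReal (setIntegral_nonneg measurableSet_Ioo hnonneg),
    intervalIntegral.integral_of_le zero_le_one, integral_Ioc_eq_integral_Ioo]

end SimplexSection

theorem toReal_volume_Icc_inter_mul_le {c : ℝ} (hc : c ≠ 0) (t : ℝ) :
    (volume {u : ℝ | (0 ≤ u ∧ u ≤ 1) ∧ c * u ≤ t}).toReal =
      slope (fun x => min (x - t) 0) 0 c := by
  obtain ⟨u, rfl⟩ : ∃ u, t = c * u := ⟨t / c, (mul_div_cancel₀ t hc).symm⟩
  rw [slope_def_field, sub_zero, eq_div_iff hc]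
  rcases hc.lt_or_gt with hc | hc
  · have hT : {x : ℝ | (0 ≤ x ∧ x ≤ 1) ∧ c * x ≤ c * u} = Set.Icc (max 0 u) 1 := by
      ext x
      simp only [Set.mem_ofPred_eq, Set.mem_Icc, max_le_iff, mul_le_mul_left_of_neg hc]
      tauto
    rw [hT, Real.volume_Icc, ENNReal.toReal_ofReal']
    simp only [min_def, max_def]
    split_ifs <;> nlinarith
  · have hT : {x : ℝ | (0 ≤ x ∧ x ≤ 1) ∧ c * x ≤ c * u} = Set.Icc 0 (min 1 u) := by
      ext x
      simp only [Set.mem_ofPred_eq, Set.mem_Icc, le_min_iff, mul_le_mul_iff_right₀ hc]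
      tauto
    rw [hT, Real.volume_Icc, ENNReal.toReal_ofReal']
    simp only [min_def, max_def]
    split_ifs <;> nlinarith

theorem volume_simplexSection_fin_one (a : Fin 1 → ℝ) (t : ℝ) :
    volume (simplexSection a t) = volume {u : ℝ | (0 ≤ u ∧ u ≤ 1) ∧ a 0 * u ≤ t} := by
  rw [← (volume_preserving_funUnique (Fin 1) ℝ).measure_preimage_equiv]
  congr 1
  ext x
  simp [simplexSection, Fin.forall_fin_one]

theorem toReal_volume_simplexSection_succ {m : ℕ} (hm : m ≠ 0) (a : Fin (m + 1) → ℝ)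
    (ha : a 0 ∉ insert 0 (univ.image (Fin.tail a)))
    (htail : ∀ τ, (volume (simplexSection (Fin.tail a) τ)).toReal =
      divDiff (insert 0 (univ.image (Fin.tail a))) (fun x => min (x - τ) 0 ^ m) / m.factorial)
    (t : ℝ) :
    (volume (simplexSection a t)).toReal =
      divDiff (insert (a 0) (insert 0 (univ.image (Fin.tail a))))
        (fun x => min (x - t) 0 ^ (m + 1)) / (m + 1).factorial := by
  set s := insert 0 (univ.image (Fin.tail a))
  set G : ℝ → ℝ := fun x => ((m : ℝ) + 1)⁻¹ * min (x - t) 0 ^ (m + 1)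
  have hG : ∀ x, HasDerivAt G (min (x - t) 0 ^ m) x := fun x =>
    (((hasDerivAt_min_zero_pow hm (x - t)).comp x ((hasDerivAt_id x).sub_const t)).const_mul
      ((m : ℝ) + 1)⁻¹).congr_deriv (by field_simp)
  have hcont : ∀ x, Continuous fun σ : ℝ => min (x + σ * (a 0 - x) - t) 0 ^ m := fun x => by
    fun_prop
  have hslice : ∀ σ ∈ Set.Ioo (0 : ℝ) 1,
      (1 - σ) ^ m * (volume (simplexSection (Fin.tail a) ((t - a 0 * σ) / (1 - σ)))).toReal =
        divDiff s (fun x => min (x + σ * (a 0 - x) - t) 0 ^ m) / m.factorial := fun σ hσ => by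
    have hc : 0 < 1 - σ := sub_pos.2 hσ.2
    rw [htail, ← mul_div_assoc, mul_divDiff]
    congr 1
    refine divDiff_congr fun x _ => ?_
    rw [← mul_pow, mul_min_of_nonneg _ _ hc.le, mul_zero]
    congr 2
    field_simp
    ring
  have hint : Continuous fun σ => divDiff s (fun x => min (x + σ * (a 0 - x) - t) 0 ^ m) := by
    simp only [divDiff]
    fun_prop
  rw [toReal_volume_simplexSection_succ_eq_integral a t
      ((hint.div_const _).intervalIntegrable 0 1) hslice,
    intervalIntegral.integral_div, integral_divDiff fun x _ => (hcont x).intervalIntegrable _ _,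
    divDiff_congr fun x hx => integral_comp_segment_eq_slope hG (by fun_prop)
      (ne_of_mem_of_not_mem hx ha),
    divDiff_congr fun x _ => slope_comm G x (a 0),
    ← divDiff_insert ha ⟨0, mem_insert_self _ _⟩, ← mul_divDiff, Nat.factorial_succ]
  push_cast
  field_simp

theorem toReal_volume_simplexSection {m : ℕ} (hm : m ≠ 0) (a : Fin m → ℝ)
    (ha : #(insert 0 (univ.image a)) = m + 1) (t : ℝ) :
    (volume (simplexSection a t)).toReal =
      divDiff (insert 0 (univ.image a)) (fun x => min (x - t) 0 ^ m) / m.factorial := by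
  -- The formula is false for `m = 0`, where `0 ^ 0 = 1`; the induction starts at `m = 1`.
  induction m, Nat.one_le_iff_ne_zero.2 hm using Nat.le_induction generalizing t with
  | base =>
    rw [image_univ_fin_succ, univ_eq_empty, image_empty, insert_empty] at ha ⊢
    have h0 : (0 : ℝ) ∉ ({a 0} : Finset ℝ) := fun h => by
      rw [insert_eq_of_mem h, card_singleton] at ha
      omega
    rw [divDiff_insert h0 (singleton_nonempty _), divDiff_singleton, volume_simplexSection_fin_one,
      toReal_volume_Icc_inter_mul_le (Ne.symm (by simpa using h0))]
    simp
  | succ m hm' ih =>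
    rw [image_univ_fin_succ, insert_comm] at ha ⊢
    have h0 : a 0 ∉ insert 0 (univ.image (Fin.tail a)) := fun h => by
      rw [insert_eq_of_mem h] at ha
      linarith [card_insert_zero_image_le (Fin.tail a)]
    rw [card_insert_of_notMem h0] at ha
    exact toReal_volume_simplexSection_succ (by omega) a h0
      (fun τ => ih (by omega) _ (by omega) τ) t

/-- The volume function `t ↦ vol(Θ(a,t))` vanishes for `t` below all the `aᵢ`,
equals `1/n!` for `t` above all the `aᵢ`, and is a piecewise polynomial of
degree at most `n` between consecutive values of `a₀, …, aₙ`. -/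
theorem volume_simplex_section_piecewise_polynomial (n : ℕ) (a : Fin n → ℝ)
    (ha : ∑ i, a i ^ 2 = 1)
    (A : Fin (n + 1) → ℝ) (hA : A = Fin.cons 0 a)
    (hdist : ∀ i j : Fin (n + 1), i ≠ j → A i ≠ A j)
    (f : ℝ → ℝ)
    (hf : ∀ t, f t = (volume {x : Fin n → ℝ |
        ((∀ i, 0 ≤ x i) ∧ ∑ i, x i ≤ 1) ∧ ∑ i, a i * x i ≤ t}).toReal) :
    (∀ t : ℝ, (∀ i, t ≤ A i) → f t = 0) ∧
    (∀ t : ℝ, (∀ i, A i ≤ t) → f t = 1 / n.factorial) ∧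
    (∀ i j : Fin (n + 1), A i < A j → (¬ ∃ k, A i < A k ∧ A k < A j) →
      ∃ p : Polynomial ℝ, p.natDegree ≤ n ∧
        ∀ t ∈ Set.Icc (A i) (A j), f t = p.eval t) := by
  have hn : n ≠ 0 := by
    rintro rfl
    simp at ha
  have hcard : #(univ.image A) = n + 1 := by
    rw [card_image_of_injective _ fun i j => not_imp_not.1 (hdist i j), card_fin]
  have hnodes : univ.image A = insert 0 (univ.image a) := by
    rw [image_univ_fin_succ, hA, Fin.cons_zero, Fin.tail_cons]
  have hf' : ∀ t, f t = divDiff (univ.image A) (fun x => min (x - t) 0 ^ n) / n.factorial :=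
    fun t => by
      rw [hf, hnodes]
      exact toReal_volume_simplexSection hn a (hnodes ▸ hcard) t
  refine ⟨fun t ht => ?_, fun t ht => ?_, fun i j _ hgap => ?_⟩
  · rw [hf', divDiff_min_sub_pow_eq_zero hn (by simpa using ht), zero_div]
  · rw [hf', divDiff_min_sub_pow_eq_one hcard (by simpa using ht)]
  · have hout : ∀ v ∈ univ.image A, v ≤ A i ∨ A j ≤ v := by
      simp only [mem_image, mem_univ, true_and, forall_exists_index, forall_apply_eq_imp_iff]
      exact fun k => by by_contra! hk; exact hgap ⟨k, hk⟩
    obtain ⟨p, hp, hpeq⟩ := exists_polynomial_eq_divDiff_min_sub_pow hn hout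
    exact ⟨C (n.factorial : ℝ)⁻¹ * p, (natDegree_C_mul_le _ _).trans hp, fun t ht => by
      rw [hf', hpeq t ht, eval_C_mul, div_eq_inv_mul]⟩
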